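/- Let l : ℝ → ℝ be five times continuously differentiable with a local minimum at z* satisfying l''(z*) > 0 and α_l(z*) = 3(l'''(z*))² − l''''(z*)·l''(z*) > 0. Let σ, τ be as guaranteed by the two-step fixed point theorem, and for η ∈ (2/l''(z*), (2+τ)/l''(z*)] let z_η⁺ ∈ (z*, z* + σ) be a two-step fixed point, i.e. D_η(z_η⁺) = l'(z_η⁺) + l'(z_η⁺ − η·l'(z_η⁺)) = 0. Then D_η'(z_η⁺) > 0; in particular z_η⁺ is a strict local minimum of the two-step loss landscape and the fixed point z_η⁺ is the unique zero of D_η in (z*, z* + σ). -/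

import Mathlib

/-!
Since `l'(z*) = 0`, the point `z*` is fixed by the gradient step, so `D_η(z*) = 0` and
`D_η'(z*) = l''(z*) (2 - η l''(z*)) < 0` once `η > 2 / l''(z*)`. At `η = 2 / l''(z*)` the step
map has derivative `-1` at `z*`, and then `D_η'''(z*) = 2 α_l(z*) / l''(z*) > 0`; by continuity
`D_η''' > 0` on a box around `(2 / l''(z*), z*)`, so there `D_η'` is convex. A convex function
that is negative at `z*` becomes positive after its first zero and stays positive. Hence `D_η`
first decreases, then increases on `[z*, z* + σ]`: a zero of `D_η` in `(z*, z* + σ)` lies in the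
increasing part, is the only one, and `D_η` changes sign there from negative to positive.
-/

open Set Filter Topology

lemma hasDerivAt_iteratedDeriv {𝕜 F : Type*} [NontriviallyNormedField 𝕜]
    [NormedAddCommGroup F] [NormedSpace 𝕜 F] {f : 𝕜 → F} {n : WithTop ℕ∞} {k : ℕ}
    (hf : ContDiff 𝕜 n f) (hk : (k : WithTop ℕ∞) < n) (x : 𝕜) :
    HasDerivAt (iteratedDeriv k f) (iteratedDeriv (k + 1) f x) x := by
  rw [iteratedDeriv_succ]
  exact (hf.differentiable_iteratedDeriv k hk x).hasDerivAt

lemma exists_pos_forall_abs_lt_of_eventually_nhds_prod {p : ℝ → ℝ → Prop} {x₀ y₀ : ℝ}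
    (h : ∀ᶠ q in 𝓝 (x₀, y₀), p q.1 q.2) :
    ∃ ε > 0, ∀ x y, |x - x₀| < ε → |y - y₀| < ε → p x y := by
  obtain ⟨ε, hε, hp⟩ := Metric.eventually_nhds_iff.1 h
  refine ⟨ε, hε, fun x y hx hy ↦ hp (y := (x, y)) ?_⟩
  rw [Prod.dist_eq, Real.dist_eq, Real.dist_eq]
  exact max_lt hx hy

section Monotonicity

variable {f f' : ℝ → ℝ} {a b : ℝ}

lemma strictMonoOn_Icc_of_hasDerivAt_pos (hf : ∀ x, HasDerivAt f (f' x) x)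
    (hf' : ∀ x ∈ Ioo a b, 0 < f' x) : StrictMonoOn f (Icc a b) :=
  strictMonoOn_of_hasDerivWithinAt_pos (convex_Icc a b)
    (fun x _ ↦ (hf x).continuousAt.continuousWithinAt) (fun x _ ↦ (hf x).hasDerivWithinAt)
    (by rwa [interior_Icc])

lemma strictAntiOn_Icc_of_hasDerivAt_neg (hf : ∀ x, HasDerivAt f (f' x) x)
    (hf' : ∀ x ∈ Ioo a b, f' x < 0) : StrictAntiOn f (Icc a b) :=
  strictAntiOn_of_hasDerivWithinAt_neg (convex_Icc a b)
    (fun x _ ↦ (hf x).continuousAt.continuousWithinAt) (fun x _ ↦ (hf x).hasDerivWithinAt)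
    (by rwa [interior_Icc])

end Monotonicity

lemma ConvexOn.pos_of_neg_of_nonneg {g : ℝ → ℝ} {s : Set ℝ} (hg : ConvexOn ℝ s g)
    {a w z : ℝ} (ha : a ∈ s) (hz : z ∈ s) (haw : a < w) (hwz : w < z) (hga : g a < 0)
    (hgw : 0 ≤ g w) : 0 < g z :=
  hgw.trans_lt <| hg.lt_right_of_left_lt ha hz
    (by rw [openSegment_eq_Ioo (haw.trans hwz)]; exact ⟨haw, hwz⟩) (hga.trans_le hgw)

theorem sign_pattern_of_convexOn_deriv {f f' : ℝ → ℝ} {a b c : ℝ}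
    (hf : ∀ x, HasDerivAt f (f' x) x) (hconv : ConvexOn ℝ (Icc a b) f') (hfa : f a = 0)
    (hf'a : f' a < 0) (hc : c ∈ Ioo a b) (hfc : f c = 0) :
    0 < f' c ∧ (∀ x ∈ Ioo a c, f x < 0) ∧ ∀ x ∈ Ioo c b, 0 < f x := by
  obtain ⟨w, ⟨haw, hwc⟩, hf'w⟩ := exists_hasDerivAt_eq_zero hc.1
    (fun x _ ↦ (hf x).continuousAt.continuousWithinAt) (hfa.trans hfc.symm) fun x _ ↦ hf x
  have hwb : w < b := hwc.trans hc.2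
  have ha : a ∈ Icc a b := left_mem_Icc.2 (haw.trans hwb).le
  -- Convexity of `f'` with `f' a < 0` forces `f' < 0` before its zero `w` and `f' > 0` after it.
  have hf'_pos : ∀ x ∈ Ioc w b, 0 < f' x := fun x hx ↦
    hconv.pos_of_neg_of_nonneg ha ⟨(haw.trans hx.1).le, hx.2⟩ haw hx.1 hf'a hf'w.ge
  have hf'_neg : ∀ x ∈ Ioo a w, f' x < 0 := fun x hx ↦ lt_of_not_ge fun h ↦
    (hconv.pos_of_neg_of_nonneg ha ⟨haw.le, hwb.le⟩ hx.1 hx.2 hf'a h).ne' hf'w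
  have hanti := strictAntiOn_Icc_of_hasDerivAt_neg hf hf'_neg
  have hmono := strictMonoOn_Icc_of_hasDerivAt_pos hf fun x hx ↦ hf'_pos x ⟨hx.1, hx.2.le⟩
  refine ⟨hf'_pos c ⟨hwc, hc.2.le⟩, fun x hx ↦ ?_, fun x hx ↦ ?_⟩
  · rcases le_or_gt x w with hxw | hwx
    · exact hfa ▸ hanti ⟨le_rfl, haw.le⟩ ⟨hx.1.le, hxw⟩ hx.1
    · exact hfc ▸ hmono ⟨hwx.le, (hx.2.trans hc.2).le⟩ ⟨hwc.le, hc.2.le⟩ hx.2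
  · exact hfc ▸ hmono ⟨hwc.le, hc.2.le⟩ ⟨(hwc.trans hx.1).le, hx.2.le⟩ hx.1

lemma exists_forall_lt_of_hasDerivAt_neg_of_pos {F f : ℝ → ℝ} {a b c : ℝ}
    (hF : ∀ x, HasDerivAt F (f x) x) (hc : c ∈ Ioo a b) (hneg : ∀ x ∈ Ioo a c, f x < 0)
    (hpos : ∀ x ∈ Ioo c b, 0 < f x) :
    ∃ ε > 0, ∀ w, w ≠ c → |w - c| < ε → F c < F w := by
  refine ⟨min (c - a) (b - c), lt_min (sub_pos.2 hc.1) (sub_pos.2 hc.2), fun w hwc hw ↦ ?_⟩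
  obtain ⟨hw₁, hw₂⟩ := abs_lt.1 hw
  have := min_le_left (c - a) (b - c)
  have := min_le_right (c - a) (b - c)
  rcases hwc.lt_or_gt with hlt | hgt
  · exact strictAntiOn_Icc_of_hasDerivAt_neg hF hneg ⟨by linarith, hlt.le⟩
      ⟨hc.1.le, le_rfl⟩ hlt
  · exact strictMonoOn_Icc_of_hasDerivAt_pos hF hpos ⟨le_rfl, hc.2.le⟩
      ⟨hgt.le, by linarith⟩ hgt

noncomputable def productStability (l : ℝ → ℝ) (z : ℝ) : ℝ :=
  3 * iteratedDeriv 3 l z ^ 2 - iteratedDeriv 4 l z * iteratedDeriv 2 l z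

noncomputable def gdStep (l : ℝ → ℝ) (η z : ℝ) : ℝ := z - η * deriv l z

noncomputable def twoStepDisp (l : ℝ → ℝ) (η z : ℝ) : ℝ :=
  deriv l z + deriv l (gdStep l η z)

noncomputable def twoStepDispDeriv (l : ℝ → ℝ) (η z : ℝ) : ℝ :=
  iteratedDeriv 2 l z + iteratedDeriv 2 l (gdStep l η z) * (1 - η * iteratedDeriv 2 l z)

noncomputable def twoStepDispDeriv2 (l : ℝ → ℝ) (η z : ℝ) : ℝ :=
  iteratedDeriv 3 l z + iteratedDeriv 3 l (gdStep l η z) * (1 - η * iteratedDeriv 2 l z) ^ 2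
    - η * iteratedDeriv 2 l (gdStep l η z) * iteratedDeriv 3 l z

noncomputable def twoStepDispDeriv3 (l : ℝ → ℝ) (η z : ℝ) : ℝ :=
  iteratedDeriv 4 l z + iteratedDeriv 4 l (gdStep l η z) * (1 - η * iteratedDeriv 2 l z) ^ 3
    - 3 * η * iteratedDeriv 3 l (gdStep l η z) * (1 - η * iteratedDeriv 2 l z)
      * iteratedDeriv 3 l z
    - η * iteratedDeriv 2 l (gdStep l η z) * iteratedDeriv 4 l z

section TwoStepDisplacement

variable {l : ℝ → ℝ} {η z : ℝ}

lemma hasDerivAt_deriv (hl : ContDiff ℝ 2 l) (x : ℝ) :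
    HasDerivAt (deriv l) (iteratedDeriv 2 l x) x := by
  simpa only [iteratedDeriv_one] using hasDerivAt_iteratedDeriv (k := 1) hl (by norm_num) x

lemma hasDerivAt_gdStep (hl : ContDiff ℝ 2 l) :
    HasDerivAt (gdStep l η) (1 - η * iteratedDeriv 2 l z) z :=
  (hasDerivAt_id z).sub ((hasDerivAt_deriv hl z).const_mul η)

lemma gdStep_of_deriv_eq_zero (h : deriv l z = 0) : gdStep l η z = z := by
  simp [gdStep, h]

lemma hasDerivAt_twoStepDisp (hl : ContDiff ℝ 2 l) :
    HasDerivAt (twoStepDisp l η) (twoStepDispDeriv l η z) z :=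
  (hasDerivAt_deriv hl z).add ((hasDerivAt_deriv hl _).comp z (hasDerivAt_gdStep hl))

lemma hasDerivAt_twoStepDispDeriv (hl : ContDiff ℝ 3 l) :
    HasDerivAt (twoStepDispDeriv l η) (twoStepDispDeriv2 l η z) z := by
  have hG := hasDerivAt_gdStep (η := η) (z := z) (hl.of_le (by norm_num))
  have h2 : ∀ x, HasDerivAt (iteratedDeriv 2 l) (iteratedDeriv 3 l x) x :=
    hasDerivAt_iteratedDeriv hl (by norm_num)
  refine ((h2 z).add (((h2 _).comp z hG).mul (((h2 z).const_mul η).const_sub 1))).congr_deriv ?_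
  simp only [twoStepDispDeriv2, Function.comp_apply]
  ring

lemma hasDerivAt_twoStepDispDeriv2 (hl : ContDiff ℝ 4 l) :
    HasDerivAt (twoStepDispDeriv2 l η) (twoStepDispDeriv3 l η z) z := by
  have hG := hasDerivAt_gdStep (η := η) (z := z) (hl.of_le (by norm_num))
  have h2 : ∀ x, HasDerivAt (iteratedDeriv 2 l) (iteratedDeriv 3 l x) x :=
    hasDerivAt_iteratedDeriv hl (by norm_num)
  have h3 : ∀ x, HasDerivAt (iteratedDeriv 3 l) (iteratedDeriv 4 l x) x :=
    hasDerivAt_iteratedDeriv hl (by norm_num)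
  have hA := ((h2 z).const_mul η).const_sub 1
  refine (((h3 z).add (((h3 _).comp z hG).mul (hA.pow 2))).sub
    ((((h2 _).comp z hG).const_mul η).mul (h3 z))).congr_deriv ?_
  simp only [twoStepDispDeriv3, Function.comp_apply, Pi.pow_apply]
  ring

lemma continuous_twoStepDispDeriv3 (hl : ContDiff ℝ 4 l) :
    Continuous fun p : ℝ × ℝ ↦ twoStepDispDeriv3 l p.1 p.2 := by
  have := hl.continuous_iteratedDeriv 1 (by norm_num)
  have := hl.continuous_iteratedDeriv 2 (by norm_num)
  have := hl.continuous_iteratedDeriv 3 (by norm_num)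
  have := hl.continuous_iteratedDeriv 4 le_rfl
  rw [iteratedDeriv_one] at *
  unfold twoStepDispDeriv3 gdStep
  fun_prop

lemma convexOn_twoStepDispDeriv (hl : ContDiff ℝ 4 l) {a b : ℝ}
    (h : ∀ x ∈ Ioo a b, 0 ≤ twoStepDispDeriv3 l η x) :
    ConvexOn ℝ (Icc a b) (twoStepDispDeriv l η) :=
  have hD' := fun x ↦ hasDerivAt_twoStepDispDeriv (η := η) (z := x) (hl.of_le (by norm_num))
  convexOn_of_hasDerivWithinAt2_nonneg (convex_Icc a b)
    (fun x _ ↦ (hD' x).continuousAt.continuousWithinAt) (fun x _ ↦ (hD' x).hasDerivWithinAt)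
    (fun _ _ ↦ (hasDerivAt_twoStepDispDeriv2 hl).hasDerivWithinAt) (by rwa [interior_Icc])

lemma twoStepDisp_of_deriv_eq_zero (h : deriv l z = 0) : twoStepDisp l η z = 0 := by
  rw [twoStepDisp, gdStep_of_deriv_eq_zero h, h, add_zero]

lemma twoStepDispDeriv_neg_of_deriv_eq_zero (h : deriv l z = 0) (h2 : 0 < iteratedDeriv 2 l z)
    (hη : 2 / iteratedDeriv 2 l z < η) : twoStepDispDeriv l η z < 0 := by
  have hη' := (div_lt_iff₀ h2).1 hη
  rw [twoStepDispDeriv, gdStep_of_deriv_eq_zero h]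
  nlinarith

lemma twoStepDispDeriv3_of_deriv_eq_zero (h : deriv l z = 0) (h2 : iteratedDeriv 2 l z ≠ 0) :
    twoStepDispDeriv3 l (2 / iteratedDeriv 2 l z) z
      = 2 * productStability l z / iteratedDeriv 2 l z := by
  rw [twoStepDispDeriv3, gdStep_of_deriv_eq_zero h, productStability]
  field_simp
  ring

lemma eventually_pos_twoStepDispDeriv3 (hl : ContDiff ℝ 4 l) (h : deriv l z = 0)
    (h2 : 0 < iteratedDeriv 2 l z) (hα : 0 < productStability l z) :
    ∀ᶠ p in 𝓝 (2 / iteratedDeriv 2 l z, z), 0 < twoStepDispDeriv3 l p.1 p.2 := by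
  refine ((continuous_twoStepDispDeriv3 hl).tendsto _).eventually_const_lt ?_
  rw [twoStepDispDeriv3_of_deriv_eq_zero h h2.ne']
  positivity

end TwoStepDisplacement

/-- At a two-step fixed point `z_η⁺ ∈ (z*, z* + σ)` of gradient descent
with learning rate `η ∈ (2/l''(z*), (2+τ)/l''(z*)]`, the derivative of the two-step
displacement `D_η` is strictly positive; in particular `z_η⁺` is a strict local minimum
of any potential for `D_η` (the two-step loss landscape) and is the unique zero of
`D_η` in `(z*, z* + σ)`. -/
theorem two_step_fixed_point_stability
    (l : ℝ → ℝ) (zs : ℝ)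
    (hl : ContDiff ℝ 5 l) (hmin : IsLocalMin l zs)
    (hl2 : 0 < iteratedDeriv 2 l zs)
    (hps : 0 < 3 * (iteratedDeriv 3 l zs) ^ 2 -
        iteratedDeriv 4 l zs * iteratedDeriv 2 l zs)
    (D : ℝ → ℝ → ℝ)
    (hD : ∀ η z : ℝ, D η z = deriv l z + deriv l (z - η * deriv l z)) :
    ∃ σ > (0 : ℝ), ∃ τ > (0 : ℝ),
      ∀ η : ℝ, 2 / iteratedDeriv 2 l zs < η → η ≤ (2 + τ) / iteratedDeriv 2 l zs →
        ∀ zp : ℝ, zp ∈ Set.Ioo zs (zs + σ) → D η zp = 0 →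
          0 < deriv (D η) zp ∧
          (∀ F : ℝ → ℝ, (∀ z : ℝ, HasDerivAt F (D η z) z) →
            ∃ ε > (0 : ℝ), ∀ w : ℝ, w ≠ zp → |w - zp| < ε → F zp < F w) ∧
          (∀ w ∈ Set.Ioo zs (zs + σ), D η w = 0 → w = zp) := by
  have hC2 : ContDiff ℝ 2 l := hl.of_le (by norm_num)
  have hC4 : ContDiff ℝ 4 l := hl.of_le (by norm_num)
  have hcrit : deriv l zs = 0 := hmin.deriv_eq_zero
  have hDη : ∀ η, D η = twoStepDisp l η := fun η ↦ funext (hD η)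
  obtain ⟨ε, hε, hD3⟩ := exists_pos_forall_abs_lt_of_eventually_nhds_prod
    (p := fun η x ↦ 0 < twoStepDispDeriv3 l η x)
    (eventually_pos_twoStepDispDeriv3 hC4 hcrit hl2 hps)
  refine ⟨ε / 2, half_pos hε, iteratedDeriv 2 l zs * ε / 2, by positivity,
    fun η hη₁ hη₂ zp hzp hDzp ↦ ?_⟩
  have hη : |η - 2 / iteratedDeriv 2 l zs| < ε := by
    rw [add_div, mul_div_assoc, mul_div_cancel_left₀ _ hl2.ne'] at hη₂
    rw [abs_lt]; constructor <;> linarith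
  have hconv : ConvexOn ℝ (Icc zs (zs + ε / 2)) (twoStepDispDeriv l η) :=
    convexOn_twoStepDispDeriv hC4 fun x hx ↦
      (hD3 η x hη (abs_lt.2 ⟨by linarith [hx.1], by linarith [hx.2]⟩)).le
  obtain ⟨hD'zp, hneg, hpos⟩ := sign_pattern_of_convexOn_deriv
    (fun _ ↦ hasDerivAt_twoStepDisp hC2) hconv (twoStepDisp_of_deriv_eq_zero hcrit)
    (twoStepDispDeriv_neg_of_deriv_eq_zero hcrit hl2 hη₁) hzp (hDη η ▸ hDzp)
  refine ⟨?_, fun F hF ↦ ?_, fun w hw hDw ↦ ?_⟩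
  · rwa [hDη, (hasDerivAt_twoStepDisp hC2).deriv]
  · exact exists_forall_lt_of_hasDerivAt_neg_of_pos (hDη η ▸ hF) hzp hneg hpos
  · rw [hDη] at hDw
    rcases lt_trichotomy w zp with h | h | h
    · exact absurd hDw (hneg w ⟨hw.1, h⟩).ne
    · exact h
    · exact absurd hDw (hpos w ⟨h, hw.2⟩).ne'
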